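/- arXiv:1108.5439 — 2 statements merged into one kernel-verified Lean document; each statement's English description precedes it below -/
import Mathlib

section
/- Let R > 0, let f and g be complex-valued functions analytic on the closed ball of radius R centered at 0 in ℂ, let 0 < r < R, and let n ≥ 1 be a natural number. Then (1/(2πi)) ∮_{|z| = r} z^{-n} f^{(n-1)}(z) g(z) dz = (1/(n-1)!) ∑_{m + s = n - 1} C(n-1, m) f^{(n-1+m)}(0) g^{(s)}(0), where the sum is over pairs of natural numbers (m, s) with m + s = n - 1, f^{(k)} denotes the k-th iterated complex derivative, and C(n-1, m) is the binomial coefficient. (This is the residue computation underlying the variation formula for period matrices under Schiffer variation, Lemma 3.1 of the paper.) -/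
/-!
The integrand is `z ^ (-(k + 1)) * F z` with `k = n - 1` and `F = f^{(k)} g` holomorphic on a
neighbourhood of the closed disc, so Cauchy's integral formula for derivatives turns the left side
into `F^{(k)}(0) / k!`, and the Leibniz rule expands `F^{(k)}(0)` into the sum on the right.
-/

open Metric Finset

section IteratedDeriv

variable {𝕜 F : Type*} [NontriviallyNormedField 𝕜] [NormedAddCommGroup F] [NormedSpace 𝕜 F]

theorem iteratedDeriv_iteratedDeriv (f : 𝕜 → F) (k m : ℕ) :
    iteratedDeriv m (iteratedDeriv k f) = iteratedDeriv (k + m) f := by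
  simp only [iteratedDeriv_eq_iterate, add_comm k, Function.iterate_add_apply]

theorem AnalyticAt.iteratedDeriv [CompleteSpace F] {f : 𝕜 → F} {x : 𝕜} (hf : AnalyticAt 𝕜 f x)
    (n : ℕ) : AnalyticAt 𝕜 (iteratedDeriv n f) x := by
  simpa only [iteratedDeriv_eq_iterate] using hf.iterated_deriv n

theorem iteratedDeriv_fun_mul_eq_sum_antidiagonal {𝔸 : Type*} [NormedRing 𝔸] [NormedAlgebra 𝕜 𝔸]
    {f g : 𝕜 → 𝔸} {x : 𝕜} {n : ℕ} (hf : ContDiffAt 𝕜 n f x) (hg : ContDiffAt 𝕜 n g x) :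
    iteratedDeriv n (fun z => f z * g z) x =
      ∑ p ∈ antidiagonal n, n.choose p.1 * iteratedDeriv p.1 f x * iteratedDeriv p.2 g x := by
  rw [iteratedDeriv_fun_mul hf hg, Nat.sum_antidiagonal_eq_sum_range_succ_mk]

end IteratedDeriv

theorem circleIntegral_zpow_neg_smul_eq_iteratedDeriv {E : Type*} [NormedAddCommGroup E]
    [NormedSpace ℂ E] [CompleteSpace E] {F : ℂ → E} {c : ℂ} {r : ℝ} (hr : 0 < r)
    (hF : DifferentiableOn ℂ F (closedBall c r)) (n : ℕ) :
    (2 * Real.pi * Complex.I)⁻¹ • ∮ z in C(c, r), (z - c) ^ (-(n + 1 : ℤ)) • F z =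
      ((n.factorial : ℂ))⁻¹ • iteratedDeriv n F c := by
  have hcauchy := hF.circleIntegral_one_div_sub_center_pow_smul hr n
  simp only [one_div, ← zpow_natCast, ← zpow_neg, Nat.cast_add, Nat.cast_one] at hcauchy
  rw [hcauchy, smul_smul, div_eq_mul_inv, ← mul_assoc, inv_mul_cancel₀ Complex.two_pi_I_ne_zero,
    one_mul]

theorem schiffer_residue_formula_general (R r : ℝ) (f g : ℂ → ℂ) (n : ℕ)
    (hf : ∀ z ∈ closedBall (0 : ℂ) R, AnalyticAt ℂ f z)
    (hg : ∀ z ∈ closedBall (0 : ℂ) R, AnalyticAt ℂ g z)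
    (hr : 0 < r) (hrR : r < R) (hn : 1 ≤ n) :
    (2 * Real.pi * Complex.I)⁻¹ *
        (∮ z in C(0, r), z ^ (-(n : ℤ)) * iteratedDeriv (n - 1) f z * g z) =
      (((n - 1).factorial : ℂ))⁻¹ *
        ∑ p ∈ Finset.HasAntidiagonal.antidiagonal (n - 1),
          ((n - 1).choose p.1 : ℂ) * iteratedDeriv (n - 1 + p.1) f 0 *
            iteratedDeriv p.2 g 0 := by
  obtain ⟨k, rfl⟩ := Nat.exists_eq_add_of_le' hn
  have hsub : closedBall (0 : ℂ) r ⊆ closedBall 0 R := closedBall_subset_closedBall hrR.le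
  have hfk (z) (hz : z ∈ closedBall (0 : ℂ) r) : AnalyticAt ℂ (iteratedDeriv k f) z :=
    (hf z (hsub hz)).iteratedDeriv k
  have hprod : DifferentiableOn ℂ (fun z => iteratedDeriv k f z * g z) (closedBall 0 r) :=
    fun z hz => ((hfk z hz).mul (hg z (hsub hz))).differentiableAt.differentiableWithinAt
  have hres := circleIntegral_zpow_neg_smul_eq_iteratedDeriv hr hprod k
  simp only [sub_zero, smul_eq_mul, ← mul_assoc] at hres
  have h0 : (0 : ℂ) ∈ closedBall 0 r := mem_closedBall_self hr.le
  rw [Nat.add_sub_cancel, Nat.cast_add, Nat.cast_one, hres,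
    iteratedDeriv_fun_mul_eq_sum_antidiagonal (hfk 0 h0).contDiffAt (hg 0 (hsub h0)).contDiffAt]
  simp only [iteratedDeriv_iteratedDeriv]

/-- The residue computation underlying the variation formula for period matrices
under Schiffer variation (Lemma 3.1 of the paper):
(1/(2πi)) ∮_{|z|=r} z^{-n} f^{(n-1)}(z) g(z) dz
  = (1/(n-1)!) ∑_{m+s=n-1} C(n-1,m) f^{(n-1+m)}(0) g^{(s)}(0). -/
theorem schiffer_residue_formula (R r : ℝ) (f g : ℂ → ℂ) (n : ℕ)
    (hR : 0 < R)
    (hf : ∀ z ∈ closedBall (0 : ℂ) R, AnalyticAt ℂ f z)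
    (hg : ∀ z ∈ closedBall (0 : ℂ) R, AnalyticAt ℂ g z)
    (hr : 0 < r) (hrR : r < R) (hn : 1 ≤ n) :
    (2 * Real.pi * Complex.I)⁻¹ *
        (∮ z in C(0, r), z ^ (-(n : ℤ)) * iteratedDeriv (n - 1) f z * g z) =
      (((n - 1).factorial : ℂ))⁻¹ *
        ∑ p ∈ Finset.HasAntidiagonal.antidiagonal (n - 1),
          ((n - 1).choose p.1 : ℂ) * iteratedDeriv (n - 1 + p.1) f 0 *
            iteratedDeriv p.2 g 0 :=
  schiffer_residue_formula_general R r f g n hf hg hr hrR hn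
end

section
/- Let R > 0 and let f and g be complex-valued functions analytic on the closed ball of radius R centered at 0 in ℂ. Then there exists δ > 0 (one may take δ = R²/8) such that for every ε ∈ ℂ with |ε| < δ, the series ∑_{n=1}^∞ (ε^n / (n! (n-1)!)) ∑_{m + s = n - 1} C(n-1, m) f^{(n-1+m)}(0) g^{(s)}(0) converges absolutely. (This establishes that the variational series for a period matrix entry under Schiffer variation, appearing in Lemma 3.1 of the paper, defines a convergent power series in the Schiffer parameter ε.) -/
/-!
By Cauchy's estimates, `‖f⁽ᵏ⁾(0)‖ ≤ A k! / Rᵏ` and `‖g⁽ᵏ⁾(0)‖ ≤ B k! / Rᵏ`. For `m + s = n` the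
factorials recombine as `C(n, m) (n + m)! s! = C(n + m, m) (n!)² ≤ 4ⁿ (n!)²`, so the `n`-th term of
the series is at most `A B ‖ε‖ (4‖ε‖ / R²)ⁿ`: the series is dominated by a geometric one and
converges absolutely for `‖ε‖ < R² / 4`.
-/

open Metric Finset
open scoped Nat

namespace Nat

theorem choose_mul_factorial_add_mul_factorial {n m s : ℕ} (h : m + s = n) :
    n.choose m * (n + m)! * s ! = (n + m).choose m * (n ! * n !) := by
  have hn : n ! = n.choose m * m ! * s ! := by
    rw [← choose_mul_factorial_mul_factorial (show m ≤ n by omega), show n - m = s by omega]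
  have hnm : (n + m)! = (n + m).choose m * n ! * m ! := by
    rw [← add_choose_mul_factorial_mul_factorial n m]
  apply Nat.eq_of_mul_eq_mul_right m.factorial_pos
  calc n.choose m * (n + m)! * s ! * m ! = (n.choose m * m ! * s !) * (n + m)! := by ring
    _ = (n + m).choose m * (n ! * n !) * m ! := by rw [← hn, hnm]; ring

theorem choose_mul_factorial_add_mul_factorial_le {n m s : ℕ} (h : m + s = n) :
    n.choose m * (n + m)! * s ! ≤ 4 ^ n * (n ! * n !) := by
  rw [choose_mul_factorial_add_mul_factorial h]
  gcongr
  calc (n + m).choose m ≤ 2 ^ (n + m) := choose_le_two_pow _ _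
    _ ≤ 2 ^ (2 * n) := Nat.pow_le_pow_right two_pos (by omega)
    _ = 4 ^ n := by rw [pow_mul]; norm_num

end Nat

theorem exists_norm_iteratedDeriv_le_of_differentiableOn_closedBall {E : Type*}
    [NormedAddCommGroup E] [NormedSpace ℂ E] [CompleteSpace E] {f : ℂ → E} {c : ℂ} {R : ℝ}
    (hR : 0 < R) (hf : DifferentiableOn ℂ f (closedBall c R)) :
    ∃ C, ∀ n, ‖iteratedDeriv n f c‖ ≤ C * n ! / R ^ n := by
  obtain ⟨C, hC⟩ := (isCompact_sphere c R).exists_bound_of_continuousOn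
    (hf.continuousOn.mono sphere_subset_closedBall)
  refine ⟨C, fun n => ?_⟩
  have hcl : DiffContOnCl ℂ f (ball c R) :=
    (hf.mono closure_ball_subset_closedBall).diffContOnCl
  simpa only [mul_comm] using Complex.norm_iteratedDeriv_le_of_forall_mem_sphere_norm_le n hR hcl hC

/-- With `a k = f⁽ᵏ⁾(0)` and `b k = g⁽ᵏ⁾(0)`, this is the paper's inner sum for the index `n + 1`. -/
def schifferCoeff (a b : ℕ → ℂ) (n : ℕ) : ℂ :=
  ∑ p ∈ antidiagonal n, (n.choose p.1 : ℂ) * a (n + p.1) * b p.2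

theorem norm_schifferCoeff_le {a b : ℕ → ℂ} {A B ρ : ℝ}
    (ha : ∀ k, ‖a k‖ ≤ A * k ! / ρ ^ k) (hb : ∀ k, ‖b k‖ ≤ B * k ! / ρ ^ k) (n : ℕ) :
    ‖schifferCoeff a b n‖ ≤ (n + 1) * (A * B * 4 ^ n * (n ! * n !) / ρ ^ (2 * n)) := by
  have hA₀ : 0 ≤ A := by simpa using (norm_nonneg _).trans (ha 0)
  have hB₀ : 0 ≤ B := by simpa using (norm_nonneg _).trans (hb 0)
  have hterm : ∀ p ∈ antidiagonal n, ‖(n.choose p.1 : ℂ) * a (n + p.1) * b p.2‖ ≤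
      A * B * 4 ^ n * (n ! * n !) / ρ ^ (2 * n) := by
    rintro ⟨m, s⟩ hp
    have hms : m + s = n := mem_antidiagonal.mp hp
    have hA : 0 ≤ A * (n + m)! / ρ ^ (n + m) := (norm_nonneg _).trans (ha _)
    calc ‖(n.choose m : ℂ) * a (n + m) * b s‖
        ≤ n.choose m * (A * (n + m)! / ρ ^ (n + m)) * (B * s ! / ρ ^ s) := by
          rw [norm_mul, norm_mul, Complex.norm_natCast]
          gcongr
          · exact ha _
          · exact hb _
      _ = A * B * ((n.choose m * (n + m)! * s ! : ℕ) : ℝ) / ρ ^ (2 * n) := by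
          rw [show 2 * n = (n + m) + s by omega, pow_add]
          push_cast
          ring
      _ ≤ A * B * ((4 ^ n * (n ! * n !) : ℕ) : ℝ) / ρ ^ (2 * n) := by
          have hρ : 0 ≤ ρ ^ (2 * n) := (even_two_mul n).pow_nonneg ρ
          gcongr A * B * Nat.cast ?_ / _
          exact Nat.choose_mul_factorial_add_mul_factorial_le hms
      _ = A * B * 4 ^ n * (n ! * n !) / ρ ^ (2 * n) := by push_cast; ring
  calc ‖schifferCoeff a b n‖ ≤ _ := norm_sum_le _ _
    _ ≤ _ := sum_le_sum hterm
    _ = _ := by rw [sum_const, Nat.card_antidiagonal, nsmul_eq_mul]; push_cast; ring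

theorem summable_norm_schiffer_series {a b : ℕ → ℂ} {A B ρ : ℝ}
    (ha : ∀ k, ‖a k‖ ≤ A * k ! / ρ ^ k) (hb : ∀ k, ‖b k‖ ≤ B * k ! / ρ ^ k) {ε : ℂ}
    (hε : 4 * ‖ε‖ < ρ ^ 2) :
    Summable fun n : ℕ =>
      ‖ε ^ (n + 1) / (((n + 1)! : ℂ) * (n ! : ℂ)) * schifferCoeff a b n‖ := by
  have hρ : 0 < ρ ^ 2 := by linarith [norm_nonneg ε]
  set q := 4 * ‖ε‖ / ρ ^ 2
  have hq : q < 1 := (div_lt_one hρ).mpr hε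
  refine Summable.of_nonneg_of_le (fun n => norm_nonneg _) (fun n => ?_)
    ((summable_geometric_of_lt_one (by positivity) hq).mul_left (A * B * ‖ε‖))
  have hfac : ((n + 1)! : ℝ) = (n + 1) * n ! := by push_cast [Nat.factorial_succ]; ring
  calc ‖ε ^ (n + 1) / (((n + 1)! : ℂ) * (n ! : ℂ)) * schifferCoeff a b n‖
      = ‖ε‖ ^ (n + 1) / ((n + 1)! * n !) * ‖schifferCoeff a b n‖ := by
        rw [norm_mul, norm_div, norm_pow, norm_mul, Complex.norm_natCast, Complex.norm_natCast]
    _ ≤ ‖ε‖ ^ (n + 1) / ((n + 1)! * n !) *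
        ((n + 1) * (A * B * 4 ^ n * (n ! * n !) / ρ ^ (2 * n))) := by
        gcongr
        exact norm_schifferCoeff_le ha hb n
    _ = A * B * ‖ε‖ * q ^ n := by
        rw [hfac, pow_mul, div_pow, mul_pow, pow_succ]
        field_simp

/-- The variational series for a period matrix entry under Schiffer variation
(Lemma 3.1 of the paper) converges absolutely for |ε| < δ, where one may take
δ = R²/8.  The index is shifted: the `n`-th term (n : ℕ) corresponds to the
paper's index n+1. -/
theorem schiffer_series_absolute_convergence (R : ℝ) (f g : ℂ → ℂ)
    (hR : 0 < R)
    (hf : ∀ z ∈ closedBall (0 : ℂ) R, AnalyticAt ℂ f z)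
    (hg : ∀ z ∈ closedBall (0 : ℂ) R, AnalyticAt ℂ g z) :
    ∃ δ : ℝ, 0 < δ ∧ δ = R ^ 2 / 8 ∧
      ∀ ε : ℂ, ‖ε‖ < δ →
        Summable fun n : ℕ =>
          ‖ε ^ (n + 1) / (((n + 1).factorial : ℂ) * (n.factorial : ℂ)) *
              ∑ p ∈ Finset.HasAntidiagonal.antidiagonal n,
                (n.choose p.1 : ℂ) * iteratedDeriv (n + p.1) f 0 *
                  iteratedDeriv p.2 g 0‖ := by
  obtain ⟨A, hA⟩ := exists_norm_iteratedDeriv_le_of_differentiableOn_closedBall hR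
    fun z hz => (hf z hz).differentiableAt.differentiableWithinAt
  obtain ⟨B, hB⟩ := exists_norm_iteratedDeriv_le_of_differentiableOn_closedBall hR
    fun z hz => (hg z hz).differentiableAt.differentiableWithinAt
  refine ⟨R ^ 2 / 8, by positivity, rfl, fun ε hε => ?_⟩
  exact summable_norm_schiffer_series hA hB (by linarith [sq_nonneg R])
end
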